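/- For all d ≥ 2 and h ≥ 2, the minimum number of pebbles required to black-pebble the complete d-ary tree of height h is exactly (d-1)h - d + 2. -/

import Mathlib

/-! ## Fractional black-white pebbling -/

/-- A fractional pebble configuration: black and white pebble values on each node. -/
structure FConfig (V : Type) where
  b : V → ℝ
  w : V → ℝ

namespace FConfig

/-- Validity: all values nonnegative, total value of each node at most 1. -/
def Valid {V : Type} (C : FConfig V) : Prop :=
  ∀ v, 0 ≤ C.b v ∧ 0 ≤ C.w v ∧ C.b v + C.w v ≤ 1

/-- Total pebble weight of a configuration. -/
noncomputable def weight {V : Type} [Fintype V] (C : FConfig V) : ℝ :=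
  ∑ v, (C.b v + C.w v)

/-- The empty configuration. -/
def zero (V : Type) : FConfig V := ⟨fun _ => 0, fun _ => 0⟩

/-- A whole (non-fractional) configuration: all values 0 or 1. -/
def Whole {V : Type} (C : FConfig V) : Prop :=
  ∀ v, (C.b v = 0 ∨ C.b v = 1) ∧ (C.w v = 0 ∨ C.w v = 1)

/-- A black configuration: whole, and with no white pebbles. -/
def BlackOnly {V : Type} (C : FConfig V) : Prop :=
  C.Whole ∧ ∀ v, C.w v = 0

end FConfig

/-- One legal move of the fractional black-white pebble game (no white sliding):
(i) decrease a black value; (ii) increase a white value; (iii) if every child of `v`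
has total pebble value 1, decrease `w v` to 0 and/or increase `b v` arbitrarily while
simultaneously decreasing the black values of the children of `v` arbitrarily.
Here `child c v` means `c` is a child of `v`. -/
def FMove {V : Type} (child : V → V → Prop) (C C' : FConfig V) : Prop :=
  (∃ v, C'.b v ≤ C.b v ∧ C'.w v = C.w v ∧
     ∀ u, u ≠ v → C'.b u = C.b u ∧ C'.w u = C.w u) ∨
  (∃ v, C'.b v = C.b v ∧ C.w v ≤ C'.w v ∧
     ∀ u, u ≠ v → C'.b u = C.b u ∧ C'.w u = C.w u) ∨
  (∃ v, (∀ c, child c v → C.b c + C.w c = 1) ∧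
     C.b v ≤ C'.b v ∧ (C'.w v = 0 ∨ C'.w v = C.w v) ∧
     (∀ c, child c v → C'.b c ≤ C.b c ∧ C'.w c = C.w c) ∧
     (∀ u, u ≠ v → ¬ child u v → C'.b u = C.b u ∧ C'.w u = C.w u))

/-- The additional white sliding move: if `w v = 1`, `j` is a child of `v`, and every
child of `v` other than `j` has total pebble value 1, then set `w v = 0` and increase
`w j` so that `j` gets total pebble value 1. -/
def WhiteSlide {V : Type} (child : V → V → Prop) (C C' : FConfig V) : Prop :=
  ∃ v j, child j v ∧ j ≠ v ∧ C.w v = 1 ∧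
    (∀ c, child c v → c ≠ j → C.b c + C.w c = 1) ∧
    C'.w v = 0 ∧ C'.b v = C.b v ∧
    C'.b j = C.b j ∧ C.w j ≤ C'.w j ∧ C'.b j + C'.w j = 1 ∧
    (∀ u, u ≠ v → u ≠ j → C'.b u = C.b u ∧ C'.w u = C.w u)

/-- A pebbling of cost at most `p`, with moves given by `move`, all configurations
satisfying the extra constraint `Extra`, starting and ending with the empty
configuration and achieving `Goal` (a property of the whole sequence together with
its length). -/
def PebblingLE {V : Type} [Fintype V] (move : FConfig V → FConfig V → Prop)
    (Extra : FConfig V → Prop) (Goal : (ℕ → FConfig V) → ℕ → Prop) (p : ℝ) : Prop :=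
  ∃ (n : ℕ) (C : ℕ → FConfig V),
    C 0 = FConfig.zero V ∧ C n = FConfig.zero V ∧
    (∀ t ≤ n, (C t).Valid) ∧
    (∀ t ≤ n, Extra (C t)) ∧
    (∀ t < n, move (C t) (C (t + 1))) ∧
    Goal C n ∧
    (∀ t ≤ n, (C t).weight ≤ p)

/-! ## The complete `d`-ary tree of height `h` (with `h` levels) -/

/-- Nodes of the complete `d`-ary tree with `h` levels: a level `l < h`
together with an index among the `d ^ l` nodes of that level. -/
abbrev TNode (d h : ℕ) := Σ l : Fin h, Fin (d ^ (l : ℕ))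

/-- `c` is a child of `v` in the complete `d`-ary tree. -/
def IsChild (d h : ℕ) (c v : TNode d h) : Prop :=
  (c.1 : ℕ) = (v.1 : ℕ) + 1 ∧ ∃ j : Fin d, (c.2 : ℕ) = d * (v.2 : ℕ) + (j : ℕ)

/-- The root of the tree. -/
def troot (d h : ℕ) (hh : 0 < h) : TNode d h :=
  ⟨⟨0, hh⟩, ⟨0, by simp⟩⟩

/-- The tree `T_d^h` has a black pebbling of cost at most `p`. -/
def BlackPebbles (d h : ℕ) (hh : 0 < h) (p : ℝ) : Prop :=
  PebblingLE (FMove (IsChild d h)) FConfig.BlackOnly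
    (fun C n => ∃ t ≤ n, (C t).b (troot d h hh) = 1) p

/-- The tree `T_d^h` has a whole black-white pebbling (no white sliding)
of cost at most `p`. -/
def BWPebbles (d h : ℕ) (hh : 0 < h) (p : ℝ) : Prop :=
  PebblingLE (FMove (IsChild d h)) FConfig.Whole
    (fun C n => ∃ t ≤ n, (C t).b (troot d h hh) = 1) p

/-- The tree `T_d^h` has a fractional pebbling of cost at most `p`. -/
def FRPebbles (d h : ℕ) (hh : 0 < h) (p : ℝ) : Prop :=
  PebblingLE (FMove (IsChild d h)) (fun _ => True)
    (fun C n => ∃ t ≤ n, (C t).b (troot d h hh) = 1) p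

/-- Fractional pebbling of `T_d^h` where white sliding moves are also permitted. -/
def FRPebblesWS (d h : ℕ) (hh : 0 < h) (p : ℝ) : Prop :=
  PebblingLE (fun C C' => FMove (IsChild d h) C C' ∨ WhiteSlide (IsChild d h) C C')
    (fun _ => True)
    (fun C n => ∃ t ≤ n, (C t).b (troot d h hh) = 1) p

/-!
A subtree with `k + 1` levels can be pebbled with `(d - 1) * k + 1` pebbles: pebble the subtrees
of the children one after another, leaving a pebble on each finished child, and finally slide
a pebble from the children to the root; while the `i`-th child is being processed at most `i ≤ d - 1` extra
pebbles lie on its finished siblings.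

Conversely, when the root of a subtree that was empty at time `t₀` receives a pebble, all
of its `d` children carry pebbles. For each child consider the last time its subtree was empty,
and pick the child for which this time is latest. By induction, that child's subtree later holds
`(d - 1) * (k - 1) + 1` pebbles at some moment, and at that moment each of the other `d - 1`
child subtrees is nonempty.
-/

open Finset Relation

theorem Relation.ReflTransGen.exists_seq {α : Type*} {r : α → α → Prop} {a b : α}
    (h : ReflTransGen r a b) :
    ∃ (n : ℕ) (f : ℕ → α), f 0 = a ∧ f n = b ∧ ∀ t < n, r (f t) (f (t + 1)) := by
  induction h using Relation.ReflTransGen.head_induction_on with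
  | refl => exact ⟨0, fun _ => b, rfl, rfl, by simp⟩
  | @head a c hac _ ih =>
    obtain ⟨n, f, hf0, hfn, hf⟩ := ih
    refine ⟨n + 1, fun t => if t = 0 then a else f (t - 1), by simp, by simp [hfn], ?_⟩
    rintro (_ | t) ht
    · simpa [hf0] using hac
    · simpa using hf t (by omega)

theorem Nat.exists_last_of_le {p : ℕ → Prop} {a b : ℕ} (hab : a ≤ b) (ha : p a) :
    ∃ s, a ≤ s ∧ s ≤ b ∧ p s ∧ ∀ t, s < t → t ≤ b → ¬ p t := by
  classical
  exact ⟨Nat.findGreatest p b, Nat.le_findGreatest hab ha, Nat.findGreatest_le b,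
    Nat.findGreatest_spec hab ha, fun _ => Nat.findGreatest_is_greatest⟩

theorem Nat.exists_not_and_succ_of_le {p : ℕ → Prop} {a b : ℕ} (hab : a ≤ b) (ha : ¬ p a)
    (hb : p b) : ∃ t, a ≤ t ∧ t < b ∧ ¬ p t ∧ p (t + 1) := by
  obtain ⟨s, has, hsb, hs, hlast⟩ := Nat.exists_last_of_le (p := fun t => ¬ p t) hab ha
  have hsb' : s < b := lt_of_le_of_ne hsb fun h => hs (h ▸ hb)
  exact ⟨s, has, hsb', hs, not_not.1 (hlast (s + 1) s.lt_succ_self hsb')⟩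

theorem Finset.add_card_sub_one_le_sum {ι : Type*} [Fintype ι] (f : ι → ℕ) (i : ι)
    (hf : ∀ j ≠ i, 1 ≤ f j) : f i + (Fintype.card ι - 1) ≤ ∑ j, f j := by
  classical
  rw [← add_sum_erase _ _ (mem_univ i), Fintype.card, ← card_erase_of_mem (mem_univ i)]
  gcongr
  simpa using card_nsmul_le_sum (univ.erase i) f 1 fun j hj => hf j (ne_of_mem_erase hj)

namespace FConfig

variable {V : Type}

theorem card_black_le_weight [Fintype V] {C : FConfig V} (hC : C.Valid) :
    ((univ.filter fun u => C.b u = 1).card : ℝ) ≤ C.weight := by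
  rw [card_eq_sum_ones, Nat.cast_sum, Nat.cast_one, weight]
  calc ∑ u ∈ univ.filter (C.b · = 1), (1 : ℝ)
      = ∑ u ∈ univ.filter (C.b · = 1), C.b u := sum_congr rfl fun u hu => (mem_filter.1 hu).2.symm
    _ ≤ ∑ u, C.b u := sum_le_sum_of_subset_of_nonneg (subset_univ _) fun u _ _ => (hC u).1
    _ ≤ ∑ u, (C.b u + C.w u) := sum_le_sum fun u _ => by linarith [(hC u).2.1]

def ofFinset [DecidableEq V] (s : Finset V) : FConfig V :=
  ⟨fun v => if v ∈ s then 1 else 0, fun _ => 0⟩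

variable [DecidableEq V]

@[simp]
theorem ofFinset_b (s : Finset V) (u : V) : (ofFinset s).b u = if u ∈ s then 1 else 0 := rfl

@[simp]
theorem ofFinset_w (s : Finset V) (u : V) : (ofFinset s).w u = 0 := rfl

theorem valid_ofFinset (s : Finset V) : (ofFinset s).Valid := by
  intro v
  by_cases hv : v ∈ s <;> simp [hv]

theorem blackOnly_ofFinset (s : Finset V) : (ofFinset s).BlackOnly :=
  ⟨fun v => ⟨by by_cases hv : v ∈ s <;> simp [hv], Or.inl rfl⟩, fun _ => rfl⟩

@[simp]
theorem ofFinset_empty : ofFinset (∅ : Finset V) = zero V := by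
  simp [ofFinset, zero]

theorem weight_ofFinset [Fintype V] (s : Finset V) : (ofFinset s).weight = s.card := by
  simp [weight, sum_ite_mem]

end FConfig

namespace FMove

open FConfig

variable {V : Type} {child : V → V → Prop}

theorem children_black_of_new_black {C C' : FConfig V} (hm : FMove child C C') (hC : C.Valid)
    (hw : ∀ v, C.w v = 0) {u : V} (hu' : C'.b u = 1) (hu : C.b u ≠ 1) :
    ∀ c, child c u → C.b c = 1 := by
  have hle : ¬ C'.b u ≤ C.b u := fun hle =>
    hu (le_antisymm (by linarith [hC u]) (hu' ▸ hle))
  rcases hm with ⟨x, hb, -, h⟩ | ⟨x, hb, -, h⟩ | ⟨x, hch, -, -, hc, h⟩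
  · obtain rfl | hux := eq_or_ne u x
    · exact absurd hb hle
    · exact absurd (h u hux).1.le hle
  · obtain rfl | hux := eq_or_ne u x
    · exact absurd hb.le hle
    · exact absurd (h u hux).1.le hle
  · obtain rfl | hux := eq_or_ne u x
    · intro c hcu
      simpa [hw c] using hch c hcu
    · by_cases hcx : child u x
      · exact absurd (hc u hcx).1 hle
      · exact absurd (h u hux hcx).1.le hle

variable [DecidableEq V]

theorem ofFinset_erase (s : Finset V) (x : V) :
    FMove child (ofFinset s) (ofFinset (s.erase x)) :=
  Or.inl ⟨x, by simpa using (valid_ofFinset s x).1, rfl, fun u hu => ⟨by simp [hu], rfl⟩⟩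

theorem ofFinset_slide {s D : Finset V} {v : V} (hs : ∀ c, child c v → c ∈ s)
    (hD : ∀ c ∈ D, child c v) : FMove child (ofFinset s) (ofFinset (insert v (s \ D))) := by
  refine Or.inr (Or.inr ⟨v, fun c hc => by simp [hs c hc],
    by simpa using (valid_ofFinset s v).2.2, Or.inl rfl,
    fun c hc => ⟨?_, rfl⟩, fun u hu hcu => ⟨?_, rfl⟩⟩)
  · have := hs c hc
    by_cases hcD : c ∈ D <;> by_cases hcv : c = v <;> simp_all
  · have : u ∉ D := fun huD => hcu (hD u huD)
    simp [hu, this]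

theorem ofFinset_union {s s' : Finset V} (hm : FMove child (ofFinset s) (ofFinset s'))
    (E : Finset V) : FMove child (ofFinset (s ∪ E)) (ofFinset (s' ∪ E)) := by
  have hunion (a : Finset V) (u : V) :
      (ofFinset (a ∪ E)).b u = max ((ofFinset a).b u) ((ofFinset E).b u) := by
    by_cases hua : u ∈ a <;> by_cases huE : u ∈ E <;> simp [hua, huE]
  rcases hm with ⟨x, hb, -, h⟩ | ⟨x, hb, -, h⟩ | ⟨x, hch, hb, -, hdown, h⟩
  · refine Or.inl ⟨x, ?_, rfl, fun u hu => ⟨?_, rfl⟩⟩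
    · simpa only [hunion] using max_le_max_right _ hb
    · simp only [hunion, (h u hu).1]
  · refine Or.inr (Or.inl ⟨x, ?_, le_rfl, fun u hu => ⟨?_, rfl⟩⟩)
    · simp only [hunion, hb]
    · simp only [hunion, (h u hu).1]
  · refine Or.inr (Or.inr ⟨x, fun c hc => ?_, ?_, Or.inl rfl, fun c hc => ⟨?_, rfl⟩,
      fun u hu hcu => ⟨?_, rfl⟩⟩)
    · have hcs : c ∈ s := by simpa using hch c hc
      simp [hcs]
    · simpa only [hunion] using max_le_max_right _ hb
    · simpa only [hunion] using max_le_max_right _ (hdown c hc).1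
    · simp only [hunion, (h u hu hcu).1]

end FMove

def BlackMove {V : Type} [DecidableEq V] (child : V → V → Prop) (B : ℕ) (s s' : Finset V) :
    Prop :=
  FMove child (FConfig.ofFinset s) (FConfig.ofFinset s') ∧ s'.card ≤ B

theorem Relation.ReflTransGen.blackMove_union {V : Type} [DecidableEq V] {child : V → V → Prop}
    {B B' : ℕ} {s s' : Finset V} (h : ReflTransGen (BlackMove child B) s s') (E : Finset V)
    (hB : E.card + B ≤ B') : ReflTransGen (BlackMove child B') (s ∪ E) (s' ∪ E) :=
  h.lift (· ∪ E) fun _ _ ⟨hm, hcard⟩ =>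
    ⟨hm.ofFinset_union E, (card_union_le _ _).trans (by omega)⟩

theorem pebblingLE_of_reflTransGen_blackMove {V : Type} [Fintype V] [DecidableEq V]
    {child : V → V → Prop} {B : ℕ} {r : V} (h : ReflTransGen (BlackMove child B) ∅ {r}) :
    PebblingLE (FMove child) FConfig.BlackOnly (fun C n => ∃ t ≤ n, (C t).b r = 1) B := by
  obtain ⟨n, f, hf0, hfn, hf⟩ := h.exists_seq
  have hcard : ∀ t ≤ n, (f t).card ≤ B := by
    rintro (_ | t) ht
    · simp [hf0]
    · exact (hf t (by omega)).2
  refine ⟨n + 1, fun t => FConfig.ofFinset (if t ≤ n then f t else ∅), by simp [hf0],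
    by simp, fun t _ => FConfig.valid_ofFinset _, fun t _ => FConfig.blackOnly_ofFinset _,
    fun t ht => ?_, ⟨n, by omega, by simp [hfn]⟩, fun t _ => ?_⟩
  · obtain ht | rfl := Nat.lt_succ_iff_lt_or_eq.1 ht
    · simpa [ht.le, Nat.succ_le_of_lt ht] using (hf t ht).1
    · simpa [hfn] using FMove.ofFinset_erase (child := child) {r} r
  · rw [FConfig.weight_ofFinset]
    split_ifs with ht
    · exact_mod_cast hcard t ht
    · simp

namespace TNode

variable {d h : ℕ}

theorem ext_val {u v : TNode d h} (h₁ : (u.1 : ℕ) = v.1) (h₂ : (u.2 : ℕ) = v.2) : u = v :=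
  Sigma.ext (Fin.ext h₁) ((Fin.heq_ext_iff (congrArg (d ^ ·) h₁)).2 h₂)

/-- The node with index `i` on level `l` has the ancestor of index `i / d ^ (l - l')` on
level `l' ≤ l`. -/
def subtree (v : TNode d h) : Finset (TNode d h) :=
  univ.filter fun u => (v.1 : ℕ) ≤ u.1 ∧ (u.2 : ℕ) / d ^ ((u.1 : ℕ) - v.1) = v.2

theorem mem_subtree {v u : TNode d h} :
    u ∈ v.subtree ↔ (v.1 : ℕ) ≤ u.1 ∧ (u.2 : ℕ) / d ^ ((u.1 : ℕ) - v.1) = v.2 := by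
  simp [subtree]

theorem mem_subtree_self (v : TNode d h) : v ∈ v.subtree := by
  simp [mem_subtree]

theorem eq_of_mem_subtree {c c' u : TNode d h} (hc : u ∈ c.subtree) (hc' : u ∈ c'.subtree)
    (hl : (c.1 : ℕ) = c'.1) : c = c' := by
  rw [mem_subtree] at hc hc'
  exact ext_val hl (by rw [← hc.2, ← hc'.2, hl])

def child (v : TNode d h) (hv : (v.1 : ℕ) + 1 < h) (j : Fin d) : TNode d h :=
  ⟨⟨v.1 + 1, hv⟩, ⟨d * v.2 + j, calc
    d * v.2 + j < d * (v.2 + 1) := by rw [mul_add_one]; omega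
    _ ≤ d * d ^ (v.1 : ℕ) := Nat.mul_le_mul_left d v.2.isLt
    _ = d ^ ((v.1 : ℕ) + 1) := (pow_succ' d _).symm⟩⟩

variable {v : TNode d h} {hv : (v.1 : ℕ) + 1 < h}

theorem isChild_child (j : Fin d) : IsChild d h (v.child hv j) v := ⟨rfl, j, rfl⟩

theorem child_injective : Function.Injective (v.child hv) := fun j j' hjj' => by
  have := congrArg (fun u : TNode d h => (u.2 : ℕ)) hjj'
  simp only [child] at this
  exact Fin.ext (by omega)

theorem _root_.IsChild.level_lt {c : TNode d h} (hc : IsChild d h c v) : (v.1 : ℕ) + 1 < h :=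
  hc.1 ▸ c.1.isLt

theorem _root_.IsChild.eq_child {c : TNode d h} (hc : IsChild d h c v) : ∃ j, c = v.child hv j := by
  obtain ⟨hl, j, hj⟩ := hc
  exact ⟨j, ext_val hl hj⟩

theorem subtree_child_subset (j : Fin d) : (v.child hv j).subtree ⊆ v.subtree := by
  intro u hu
  rw [mem_subtree] at hu ⊢
  obtain ⟨hl, hu⟩ := hu
  simp only [child] at hl hu
  have he : (u.1 : ℕ) - v.1 = (u.1 - (v.1 + 1)) + 1 := by omega
  refine ⟨by omega, ?_⟩
  rw [he, pow_succ, ← Nat.div_div_eq_div_mul, hu, Nat.mul_add_div j.pos,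
    Nat.div_eq_of_lt j.isLt, add_zero]

theorem disjoint_subtree_child {j j' : Fin d} (hjj' : j ≠ j') :
    Disjoint (v.child hv j).subtree (v.child hv j').subtree :=
  disjoint_left.2 fun _ hu hu' => hjj' (child_injective (eq_of_mem_subtree hu hu' rfl))

theorem sum_card_inter_subtree_child_le (S : Finset (TNode d h)) :
    ∑ j, (S ∩ (v.child hv j).subtree).card ≤ (S ∩ v.subtree).card := by
  rw [← card_biUnion fun j _ j' _ hjj' =>
    (disjoint_subtree_child hjj').mono inter_subset_right inter_subset_right]
  exact card_le_card (biUnion_subset.2 fun j _ =>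
    inter_subset_inter_left (subtree_child_subset j))

theorem reflTransGen_blackMove_singleton :
    ∀ (k : ℕ) (v : TNode d h), (v.1 : ℕ) + k + 1 = h →
      ReflTransGen (BlackMove (IsChild d h) ((d - 1) * k + 1)) ∅ {v}
  | 0, v, hv => .single ⟨by
      simpa using FMove.ofFinset_slide (child := IsChild d h) (s := ∅) (D := ∅)
        (fun c hc => absurd hc.level_lt (by omega)) (by simp), by simp⟩
  | k + 1, v, hv => by
    have hlt : (v.1 : ℕ) + 1 < h := by omega
    have hchildren : ∀ S : Finset (Fin d), ReflTransGen
        (BlackMove (IsChild d h) ((d - 1) * (k + 1) + 1)) ∅ (S.image (v.child hlt)) := by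
      intro S
      induction S using Finset.induction_on with
      | empty => exact .refl
      | insert j S hj ih =>
        have hS : S.card + 1 ≤ d := by
          simpa using card_lt_univ_of_notMem hj
        have hc := (reflTransGen_blackMove_singleton k (v.child hlt j) (by simp [child]; omega))
          |>.blackMove_union (B' := (d - 1) * (k + 1) + 1) (S.image (v.child hlt))
          (by have := card_image_le (s := S) (f := v.child hlt); rw [mul_add_one]; omega)
        rw [empty_union] at hc
        rw [image_insert, insert_eq]
        exact ih.trans hc
    refine (hchildren univ).tail ⟨?_, by simp⟩
    simpa using FMove.ofFinset_slide (child := IsChild d h)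
      (s := univ.image (v.child hlt)) (D := univ.image (v.child hlt))
      (fun c hc => by simpa [eq_comm] using hc.eq_child (hv := hlt)) (by simp [isChild_child])

end TNode

/-- `P t` is the set of nodes carrying a black pebble at time `t`. -/
def IsBlackHistory {V : Type} (child : V → V → Prop) (P : ℕ → Finset V) (n : ℕ) : Prop :=
  ∀ t < n, ∀ u ∈ P (t + 1), u ∉ P t → ∀ c, child c u → c ∈ P t

namespace IsBlackHistory

open TNode

variable {d h n : ℕ} {P : ℕ → Finset (TNode d h)}

theorem le_card_inter_subtree_succ (hd : 0 < d) (hP : IsBlackHistory (IsChild d h) P n) {m : ℕ}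
    (ih : ∀ c : TNode d h, (c.1 : ℕ) + m + 1 = h → ∀ t₀ t₁, t₀ ≤ t₁ → t₁ ≤ n →
      Disjoint (P t₀) c.subtree → c ∈ P t₁ →
      ∃ t, t₀ ≤ t ∧ t ≤ t₁ ∧ (d - 1) * m + 1 ≤ (P t ∩ c.subtree).card)
    {v : TNode d h} (hv : (v.1 : ℕ) + (m + 1) + 1 = h) {t₀ t₁ : ℕ} (h01 : t₀ ≤ t₁)
    (h1n : t₁ ≤ n) (hempty : Disjoint (P t₀) v.subtree) (hv₁ : v ∈ P t₁) :
    ∃ t, t₀ ≤ t ∧ t ≤ t₁ ∧ (d - 1) * (m + 1) + 1 ≤ (P t ∩ v.subtree).card := by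
  have hlt : (v.1 : ℕ) + 1 < h := by omega
  obtain ⟨t', h0', h'1, hv', hv'₁⟩ := Nat.exists_not_and_succ_of_le (p := (v ∈ P ·)) h01
    (fun hv₀ => disjoint_left.1 hempty hv₀ (mem_subtree_self v)) hv₁
  have hchildren (j : Fin d) : v.child hlt j ∈ P t' :=
    hP t' (by omega) v hv'₁ hv' _ (isChild_child j)
  choose s hs₀ hs₁ hsempty hslast using fun j : Fin d =>
    Nat.exists_last_of_le (p := fun t => Disjoint (P t) (v.child hlt j).subtree) h0'
      (hempty.mono_right (subtree_child_subset j))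
  obtain ⟨j, -, hj⟩ := exists_max_image univ s ⟨⟨0, hd⟩, mem_univ _⟩
  obtain ⟨τ, hτ₀, hτ₁, hτ⟩ := ih (v.child hlt j) (by simp [child]; omega) (s j) t' (hs₁ j)
    (by omega) (hsempty j) (hchildren j)
  have hsτ : s j < τ := lt_of_le_of_ne hτ₀ fun hsτ => by
    simp [hsτ ▸ disjoint_iff_inter_eq_empty.1 (hsempty j)] at hτ
  have hnonempty (i : Fin d) : 1 ≤ (P τ ∩ (v.child hlt i).subtree).card :=
    card_pos.2 (not_disjoint_iff_nonempty_inter.1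
      (hslast i τ ((hj i (mem_univ i)).trans_lt hsτ) hτ₁))
  refine ⟨τ, (hs₀ j).trans hτ₀, by omega, ?_⟩
  calc (d - 1) * (m + 1) + 1 = ((d - 1) * m + 1) + (Fintype.card (Fin d) - 1) := by
        rw [Fintype.card_fin, mul_add_one]; omega
    _ ≤ ∑ i, (P τ ∩ (v.child hlt i).subtree).card :=
        (Nat.add_le_add_right hτ _).trans (add_card_sub_one_le_sum _ j fun i _ => hnonempty i)
    _ ≤ (P τ ∩ v.subtree).card := sum_card_inter_subtree_child_le _

theorem le_card_inter_subtree (hd : 0 < d) (hP : IsBlackHistory (IsChild d h) P n) :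
    ∀ (m : ℕ) (v : TNode d h), (v.1 : ℕ) + m + 1 = h → ∀ t₀ t₁, t₀ ≤ t₁ → t₁ ≤ n →
      Disjoint (P t₀) v.subtree → v ∈ P t₁ →
      ∃ t, t₀ ≤ t ∧ t ≤ t₁ ∧ (d - 1) * m + 1 ≤ (P t ∩ v.subtree).card
  | 0, v, _, _, t₁, h01, _, _, hv₁ =>
    ⟨t₁, h01, le_rfl, card_pos.2 ⟨v, mem_inter.2 ⟨hv₁, mem_subtree_self v⟩⟩⟩
  | m + 1, _, hv, _, _, h01, h1n, hempty, hv₁ =>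
    le_card_inter_subtree_succ hd hP (le_card_inter_subtree hd hP m) hv h01 h1n hempty hv₁

end IsBlackHistory

theorem blackPebbles_sub_one_mul_sub_one_add_one (d : ℕ) {h : ℕ} (hh : 0 < h) :
    BlackPebbles d h hh ((d - 1) * (h - 1) + 1 : ℕ) :=
  pebblingLE_of_reflTransGen_blackMove
    (TNode.reflTransGen_blackMove_singleton (h - 1) _ (by simp [troot]; omega))

theorem BlackPebbles.le {d h : ℕ} {hh : 0 < h} {p : ℝ} (hd : 0 < d) (hp : BlackPebbles d h hh p) :
    (((d - 1) * (h - 1) + 1 : ℕ) : ℝ) ≤ p := by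
  obtain ⟨n, C, hC₀, -, hvalid, hblack, hmove, ⟨t₁, ht₁n, hroot⟩, hweight⟩ := hp
  set P : ℕ → Finset (TNode d h) := fun t => univ.filter fun u => (C t).b u = 1
  have hP : IsBlackHistory (IsChild d h) P n := fun t ht u hu hu' c hc => by
    simpa [P] using (hmove t ht).children_black_of_new_black (hvalid t ht.le) (hblack t ht.le).2
      (by simpa [P] using hu) (by simpa [P] using hu') c hc
  obtain ⟨t, -, ht, hcard⟩ := hP.le_card_inter_subtree hd (h - 1) (troot d h hh)
    (by simp [troot]; omega) 0 t₁ (Nat.zero_le _) ht₁n (by simp [P, hC₀, FConfig.zero])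
    (by simpa [P] using hroot)
  calc (((d - 1) * (h - 1) + 1 : ℕ) : ℝ) ≤ (P t).card :=
        Nat.cast_le.2 (hcard.trans (card_le_card inter_subset_left))
    _ ≤ (C t).weight := FConfig.card_black_le_weight (hvalid t (ht.trans ht₁n))
    _ ≤ p := hweight t (ht.trans ht₁n)

theorem blackPebbles_tree_eq (d h : ℕ) (hd : 2 ≤ d) (hh : 2 ≤ h) :
    BlackPebbles d h (by omega) (((d : ℝ) - 1) * h - d + 2) ∧
    ∀ p : ℝ, BlackPebbles d h (by omega) p → ((d : ℝ) - 1) * h - d + 2 ≤ p := by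
  have hcast : (((d - 1) * (h - 1) + 1 : ℕ) : ℝ) = ((d : ℝ) - 1) * h - d + 2 := by
    push_cast [Nat.cast_sub (by omega : 1 ≤ d), Nat.cast_sub (by omega : 1 ≤ h)]
    ring
  rw [← hcast]
  exact ⟨blackPebbles_sub_one_mul_sub_one_add_one d _, fun p hp => hp.le (by omega)⟩
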